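/- Let γ₁,γ₂,ρ₁,ρ₂ ∈ (0,1] with γ₁+ρ₁ > 1 and γ₂+ρ₂ > 1, and let f,g : [0,1]² → ℝ be continuous with 𝒩_{γ₁,γ₂}(f) < ∞ and 𝒩_{ρ₁,ρ₂}(g) < ∞. Then for every rectangle [s,s′]×[t,t′] ⊆ [0,1]² the two-dimensional Young Riemann sums S_Π = Σ_{i,j} f(σ_i,τ_j)·(δg)(σ_i,σ_{i+1};τ_j,τ_{j+1}) over grid partitions Π of [s,s′]×[t,t′] converge to a finite limit as |Π| → 0 (this limit defines the two-dimensional Young integral ∬_{[s,s′]×[t,t′]} f dg). -/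

import Mathlib

open Set

/-- Rectangular increment `(δf)(s₁,s₂;t₁,t₂)`. -/
def dd (f : ℝ → ℝ → ℝ) (s₁ s₂ t₁ t₂ : ℝ) : ℝ :=
  f s₂ t₂ - f s₁ t₂ - f s₂ t₁ + f s₁ t₁

/-- Increment in the first direction `(δ₁f)(s₁,s₂;t)`. -/
def d1 (f : ℝ → ℝ → ℝ) (s₁ s₂ t : ℝ) : ℝ := f s₂ t - f s₁ t

/-- Increment in the second direction `(δ₂f)(s;t₁,t₂)`. -/
def d2 (f : ℝ → ℝ → ℝ) (s t₁ t₂ : ℝ) : ℝ := f s t₂ - f s t₁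

/-- `σ` is a grid of `[a,b]` with `m` subintervals. -/
def IsGrid (a b : ℝ) (m : ℕ) (σ : ℕ → ℝ) : Prop :=
  σ 0 = a ∧ σ m = b ∧ ∀ i < m, σ i < σ (i + 1)

/-- The mesh of the grid `σ` is at most `η`. -/
def MeshLE (m : ℕ) (σ : ℕ → ℝ) (η : ℝ) : Prop :=
  ∀ i < m, σ (i + 1) - σ i ≤ η

/-- Convergence of two-dimensional Riemann sums with local summand
`F σᵢ σᵢ₊₁ τⱼ τⱼ₊₁` over grid partitions of `[s,s']×[t,t']` to the limit `L`. -/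
def RConv (s s' t t' : ℝ) (F : ℝ → ℝ → ℝ → ℝ → ℝ) (L : ℝ) : Prop :=
  ∀ ε > (0:ℝ), ∃ η > (0:ℝ), ∀ (m n : ℕ) (σ τ : ℕ → ℝ),
    IsGrid s s' m σ → IsGrid t t' n τ → MeshLE m σ η → MeshLE n τ η →
    |(∑ i ∈ Finset.range m, ∑ j ∈ Finset.range n,
        F (σ i) (σ (i + 1)) (τ j) (τ (j + 1))) - L| ≤ ε

/-- `𝒩_{ρ₁,ρ₂}(f) < ∞` on `[0,1]²`. -/
def NFin (ρ₁ ρ₂ : ℝ) (f : ℝ → ℝ → ℝ) : Prop :=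
  ∃ C : ℝ,
    (∀ s₁ s₂ t₁ t₂ : ℝ, s₁ ∈ Icc (0:ℝ) 1 → s₂ ∈ Icc (0:ℝ) 1 →
      t₁ ∈ Icc (0:ℝ) 1 → t₂ ∈ Icc (0:ℝ) 1 →
      |dd f s₁ s₂ t₁ t₂| ≤ C * |s₂ - s₁| ^ ρ₁ * |t₂ - t₁| ^ ρ₂) ∧
    (∀ s₁ s₂ t : ℝ, s₁ ∈ Icc (0:ℝ) 1 → s₂ ∈ Icc (0:ℝ) 1 → t ∈ Icc (0:ℝ) 1 →
      |d1 f s₁ s₂ t| ≤ C * |s₂ - s₁| ^ ρ₁) ∧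
    (∀ s t₁ t₂ : ℝ, s ∈ Icc (0:ℝ) 1 → t₁ ∈ Icc (0:ℝ) 1 → t₂ ∈ Icc (0:ℝ) 1 →
      |d2 f s t₁ t₂| ≤ C * |t₂ - t₁| ^ ρ₂) ∧
    (∀ s t : ℝ, s ∈ Icc (0:ℝ) 1 → t ∈ Icc (0:ℝ) 1 → |f s t| ≤ C)

/-!
Two-parameter sewing. For a fixed grid `τ` in the second variable, the row sums
`x, y ↦ ∑ⱼ f(x,τⱼ) (δg)(x,y;τⱼ,τⱼ₊₁)` form a germ whose defect
`H(x,z) - H(x,y) - H(y,z)` is `O(|z - x|^{γ₁+ρ₁})` uniformly in `τ`, because that defect is a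
one-dimensional Young sum; symmetrically for the column sums. Young's point-removal argument turns
a defect of order `θ > 1` into the bound `C (2 (b - a))^θ ∑ₖ (k + 1)^{-θ}` for the Riemann sums of
the germ over `[a, b]`, so refining a grid of mesh `η` changes its sum by `O(η^{θ-1})`. Passing to a
common refinement, first in `s` and then in `t`, shows that the two-dimensional sums are Cauchy as
the mesh tends to `0`.
-/

section TwoDimensionalYoung

open Finset Filter Topology

namespace IsGrid

variable {a b : ℝ} {m n : ℕ} {σ : ℕ → ℝ}

lemma strictMonoOn (h : IsGrid a b m σ) : StrictMonoOn σ (Set.Iic m) :=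
  strictMonoOn_Iic_of_lt_succ h.2.2

lemma mem_Icc (h : IsGrid a b m σ) {i : ℕ} (hi : i ≤ m) : σ i ∈ Icc a b := by
  refine ⟨h.1 ▸ h.strictMonoOn.monotoneOn ?_ ?_ (Nat.zero_le i),
    h.2.1 ▸ h.strictMonoOn.monotoneOn ?_ ?_ hi⟩ <;> simp [hi]

lemma le (h : IsGrid a b m σ) : a ≤ b := (h.mem_Icc le_rfl).1.trans_eq h.2.1

lemma sum_sub (h : IsGrid a b m σ) : ∑ i ∈ range m, (σ (i + 1) - σ i) = b - a := by
  rw [sum_range_sub, h.1, h.2.1]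

lemma shift (h : IsGrid a b m σ) {p q : ℕ} (hpq : p ≤ q) (hq : q ≤ m) :
    IsGrid (σ p) (σ q) (q - p) (fun j => σ (p + j)) :=
  ⟨by simp, by simp [Nat.add_sub_cancel' hpq], fun j hj => h.2.2 (p + j) (by omega)⟩

lemma exists_sub_le (h : IsGrid a b (n + 2) σ) :
    ∃ k < n + 1, σ (k + 2) - σ k ≤ 2 * (b - a) / (n + 1) := by
  have htel : ∑ k ∈ range (n + 1), (σ (k + 2) - σ k)
      = (σ (n + 2) - σ 1) + (σ (n + 1) - σ 0) := by
    rw [← sum_range_sub (fun i => σ (i + 1)), ← sum_range_sub σ, ← sum_add_distrib]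
    exact sum_congr rfl fun k _ => by ring
  have hsum : ∑ k ∈ range (n + 1), (σ (k + 2) - σ k)
      ≤ ∑ _k ∈ range (n + 1), 2 * (b - a) / (n + 1) := by
    have h1 := h.mem_Icc (i := 1) (by omega)
    have hn := h.mem_Icc (i := n + 1) (by omega)
    rw [htel, sum_const, card_range, nsmul_eq_mul, h.1, h.2.1, Nat.cast_succ,
      mul_div_cancel₀ _ (by positivity)]
    linarith [h1.1, hn.2]
  simpa using exists_le_of_sum_le nonempty_range_add_one hsum

/-- The grid obtained by deleting the point `σ (k + 1)`. -/
lemma skip (h : IsGrid a b (n + 2) σ) {k : ℕ} (hk : k < n + 1) :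
    IsGrid a b (n + 1) (fun i => σ (if i ≤ k then i else i + 1)) := by
  refine ⟨by simpa using h.1, by simpa [show ¬ n + 1 ≤ k by omega] using h.2.1, fun i hi => ?_⟩
  rcases lt_trichotomy i k with hik | rfl | hik
  · simpa [hik.le, show i + 1 ≤ k by omega] using h.2.2 i (by omega)
  · simpa using (h.2.2 i (by omega)).trans (h.2.2 (i + 1) (by omega))
  · simpa [show ¬ i ≤ k by omega, show ¬ i + 1 ≤ k by omega] using h.2.2 (i + 1) (by omega)

end IsGrid

lemma sum_range_skip (F : ℕ → ℕ → ℝ) {k n : ℕ} (hk : k < n + 1) :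
    (∑ i ∈ range (n + 1), F (if i ≤ k then i else i + 1) (if i + 1 ≤ k then i + 1 else i + 1 + 1))
      + F k (k + 1) + F (k + 1) (k + 2)
      = ∑ i ∈ range (n + 2), F i (i + 1) + F k (k + 2) := by
  induction n, Nat.lt_succ_iff.1 hk using Nat.le_induction with
  | base =>
    have hlow : ∀ i ∈ range k,
        F (if i ≤ k then i else i + 1) (if i + 1 ≤ k then i + 1 else i + 1 + 1) = F i (i + 1) :=
      fun i hi => by simp [(mem_range.1 hi).le, Nat.succ_le_of_lt (mem_range.1 hi)]
    simp only [sum_range_succ, sum_congr rfl hlow, le_refl, if_true,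
      show ¬ k + 1 ≤ k by omega, if_false]
    ring
  | succ n hkn ih =>
    rw [sum_range_succ, sum_range_succ _ (n + 2)]
    simp only [show ¬ n + 1 ≤ k by omega, show ¬ n + 1 + 1 ≤ k by omega, if_false]
    linarith [ih (by omega)]

def SewingBound (C θ a b : ℝ) (H : ℝ → ℝ → ℝ) : Prop :=
  ∀ x y z, a ≤ x → x ≤ y → y ≤ z → z ≤ b → |H x z - H x y - H y z| ≤ C * (z - x) ^ θ

noncomputable def sewingConst (θ : ℝ) : ℝ := ∑' k : ℕ, 1 / ((k : ℝ) + 1) ^ θ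

lemma summable_one_div_nat_add_one_rpow {θ : ℝ} (hθ : 1 < θ) :
    Summable fun k : ℕ => 1 / ((k : ℝ) + 1) ^ θ := by
  simpa using (summable_nat_add_iff 1).2 (Real.summable_one_div_nat_rpow.2 hθ)

lemma sewingConst_nonneg (θ : ℝ) : 0 ≤ sewingConst θ :=
  tsum_nonneg fun _ => by positivity

namespace SewingBound

variable {C θ a b : ℝ} {H : ℝ → ℝ → ℝ}

lemma mono (h : SewingBound C θ a b H) {a' b' : ℝ} (ha : a ≤ a') (hb : b' ≤ b) :
    SewingBound C θ a' b' H :=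
  fun x y z hx hxy hyz hz => h x y z (ha.trans hx) hxy hyz (hz.trans hb)

/-- Young's point-removal argument: a grid with `n + 2` intervals has a point whose removal
changes the Riemann sum by at most `C (2 (b - a) / (n + 1)) ^ θ`. -/
lemma abs_sum_sub_le_sum (h : SewingBound C θ a b H) (hθ : 0 < θ) (hC : 0 ≤ C) {n : ℕ}
    {σ : ℕ → ℝ} (hσ : IsGrid a b n σ) :
    |∑ i ∈ range n, H (σ i) (σ (i + 1)) - H a b|
      ≤ C * (2 * (b - a)) ^ θ * ∑ k ∈ range (n - 1), 1 / ((k : ℝ) + 1) ^ θ := by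
  induction n generalizing σ with
  | zero =>
    obtain rfl : a = b := hσ.1.symm.trans hσ.2.1
    simpa [hθ.ne'] using h a a a le_rfl le_rfl le_rfl le_rfl
  | succ n ih =>
    rcases n with _ | n
    · simp [hσ.1, hσ.2.1]
    obtain ⟨k, hk, hgap⟩ := hσ.exists_sub_le
    have hremove := h (σ k) (σ (k + 1)) (σ (k + 2)) (hσ.mem_Icc (by omega)).1
      (hσ.2.2 k (by omega)).le (hσ.2.2 (k + 1) (by omega)).le (hσ.mem_Icc (by omega)).2
    have hgapθ : (σ (k + 2) - σ k) ^ θ ≤ (2 * (b - a)) ^ θ * (1 / ((n : ℝ) + 1) ^ θ) := by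
      rw [mul_one_div, ← Real.div_rpow (by linarith [hσ.le]) (by positivity)]
      exact Real.rpow_le_rpow (by linarith [hσ.2.2 k (by omega), hσ.2.2 (k + 1) (by omega)])
        hgap hθ.le
    have hskip := ih (hσ.skip hk)
    rw [Nat.add_sub_cancel] at hskip
    have hsum := sum_range_skip (fun i j => H (σ i) (σ j)) hk
    rw [Nat.add_sub_cancel, sum_range_succ _ n]
    calc |∑ i ∈ range (n + 2), H (σ i) (σ (i + 1)) - H a b|
        = |(∑ i ∈ range (n + 1), H (σ (if i ≤ k then i else i + 1))
              (σ (if i + 1 ≤ k then i + 1 else i + 1 + 1)) - H a b)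
            - (H (σ k) (σ (k + 2)) - H (σ k) (σ (k + 1)) - H (σ (k + 1)) (σ (k + 2)))| :=
          congrArg abs (by linarith)
      _ ≤ C * (2 * (b - a)) ^ θ * ∑ k ∈ range n, 1 / ((k : ℝ) + 1) ^ θ
          + C * ((2 * (b - a)) ^ θ * (1 / ((n : ℝ) + 1) ^ θ)) :=
          (abs_sub _ _).trans
            (add_le_add hskip (hremove.trans (mul_le_mul_of_nonneg_left hgapθ hC)))
      _ = _ := by ring

lemma abs_sum_sub_le (h : SewingBound C θ a b H) (hθ : 1 < θ) (hC : 0 ≤ C) {n : ℕ}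
    {σ : ℕ → ℝ} (hσ : IsGrid a b n σ) :
    |∑ i ∈ range n, H (σ i) (σ (i + 1)) - H a b| ≤ C * (2 * (b - a)) ^ θ * sewingConst θ := by
  refine (h.abs_sum_sub_le_sum (by linarith) hC hσ).trans (mul_le_mul_of_nonneg_left ?_ ?_)
  · exact (summable_one_div_nat_add_one_rpow hθ).sum_le_tsum _ fun k _ => by positivity
  · exact mul_nonneg hC (Real.rpow_nonneg (by linarith [hσ.le]) θ)

end SewingBound

lemma sum_range_sum_Ico_eq {M : Type*} [AddCommGroup M] (f : ℕ → M) {p : ℕ → ℕ} {m : ℕ}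
    (hp : ∀ i < m, p i ≤ p (i + 1)) :
    ∑ i ∈ range m, ∑ I ∈ Ico (p i) (p (i + 1)), f I
      = ∑ I ∈ range (p m), f I - ∑ I ∈ range (p 0), f I := by
  rw [sum_congr rfl fun i hi => sum_Ico_eq_sub f (hp i (mem_range.1 hi)),
    sum_range_sub (fun i => ∑ I ∈ range (p i), f I)]

lemma rpow_le_rpow_sub_one_mul {x η θ : ℝ} (hx : 0 ≤ x) (hxη : x ≤ η) (hθ : 1 ≤ θ) :
    x ^ θ ≤ η ^ (θ - 1) * x := by
  calc x ^ θ = x ^ (θ - 1) * x := by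
        conv_lhs => rw [← sub_add_cancel θ 1]
        rw [Real.rpow_add' hx (by linarith), Real.rpow_one]
    _ ≤ η ^ (θ - 1) * x :=
        mul_le_mul_of_nonneg_right (Real.rpow_le_rpow hx hxη (by linarith)) hx

lemma IsGrid.exists_index_of_subset {a b : ℝ} {m M : ℕ} {σ σs : ℕ → ℝ} (hσ : IsGrid a b m σ)
    (hσs : IsGrid a b M σs) (hsub : σ '' Set.Iic m ⊆ σs '' Set.Iic M) :
    ∃ p : ℕ → ℕ, p 0 = 0 ∧ p m = M ∧ (∀ i < m, p i < p (i + 1)) ∧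
      ∀ i ≤ m, p i ≤ M ∧ σs (p i) = σ i := by
  have hidx : ∀ i, ∃ I, i ≤ m → I ≤ M ∧ σs I = σ i := fun i => by
    by_cases hi : i ≤ m
    · obtain ⟨I, hI, hσI⟩ := hsub ⟨i, hi, rfl⟩
      exact ⟨I, fun _ => ⟨hI, hσI⟩⟩
    · exact ⟨0, fun h => absurd h hi⟩
  choose p hp using hidx
  refine ⟨p, ?_, ?_, fun i hi => ?_, hp⟩
  · exact hσs.strictMonoOn.injOn (hp 0 (Nat.zero_le _)).1 (Nat.zero_le M)
      (by rw [(hp 0 (Nat.zero_le _)).2, hσ.1, hσs.1])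
  · exact hσs.strictMonoOn.injOn (hp m le_rfl).1 (le_refl M)
      (by rw [(hp m le_rfl).2, hσ.2.1, hσs.2.1])
  · exact (hσs.strictMonoOn.lt_iff_lt (hp i hi.le).1 (hp (i + 1) hi).1).1
      (by rw [(hp i hi.le).2, (hp (i + 1) hi).2]; exact hσ.2.2 i hi)

namespace SewingBound

variable {C θ a b : ℝ} {H : ℝ → ℝ → ℝ}

lemma abs_sum_sub_sum_le (h : SewingBound C θ a b H) (hθ : 1 < θ) (hC : 0 ≤ C)
    {m M : ℕ} {σ σs : ℕ → ℝ} {η : ℝ} (hσ : IsGrid a b m σ) (hmesh : MeshLE m σ η)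
    (hσs : IsGrid a b M σs) (hsub : σ '' Set.Iic m ⊆ σs '' Set.Iic M) :
    |∑ I ∈ range M, H (σs I) (σs (I + 1)) - ∑ i ∈ range m, H (σ i) (σ (i + 1))|
      ≤ C * 2 ^ θ * sewingConst θ * (b - a) * η ^ (θ - 1) := by
  obtain ⟨p, hp0, hpm, hp_lt, hp⟩ := hσ.exists_index_of_subset hσs hsub
  have hCK : 0 ≤ C * 2 ^ θ * sewingConst θ := by
    have := sewingConst_nonneg θ
    positivity
  have hblock : ∀ i ∈ range m,
      |∑ I ∈ Ico (p i) (p (i + 1)), H (σs I) (σs (I + 1)) - H (σ i) (σ (i + 1))|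
        ≤ C * 2 ^ θ * sewingConst θ * (η ^ (θ - 1) * (σ (i + 1) - σ i)) := by
    intro i hi
    have hi := mem_range.1 hi
    have hgap : 0 ≤ σ (i + 1) - σ i := sub_nonneg.2 (hσ.2.2 i hi).le
    have hblock_grid := hσs.shift (hp_lt i hi).le (hp (i + 1) hi).1
    rw [(hp i hi.le).2, (hp (i + 1) hi).2] at hblock_grid
    rw [sum_Ico_eq_sum_range]
    refine ((h.mono (hσ.mem_Icc hi.le).1 (hσ.mem_Icc hi).2).abs_sum_sub_le hθ hC
      hblock_grid).trans ?_
    rw [Real.mul_rpow zero_le_two hgap, ← mul_assoc, mul_right_comm]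
    exact mul_le_mul_of_nonneg_left (rpow_le_rpow_sub_one_mul hgap (hmesh i hi) hθ.le) hCK
  have hsplit : ∑ I ∈ range M, H (σs I) (σs (I + 1))
      = ∑ i ∈ range m, ∑ I ∈ Ico (p i) (p (i + 1)), H (σs I) (σs (I + 1)) := by
    rw [sum_range_sum_Ico_eq _ fun i hi => (hp_lt i hi).le, hp0, hpm, sum_range_zero, sub_zero]
  rw [hsplit, ← sum_sub_distrib]
  refine (abs_sum_le_sum_abs _ _).trans ((sum_le_sum hblock).trans_eq ?_)
  rw [← mul_sum, ← mul_sum, hσ.sum_sub]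
  ring

end SewingBound

lemma exists_isGrid_of_finite {a b : ℝ} {T : Set ℝ} (hT : T.Finite) (ha : a ∈ T) (hb : b ∈ T)
    (hTab : T ⊆ Icc a b) : ∃ M σ, IsGrid a b M σ ∧ T ⊆ σ '' Set.Iic M := by
  set s := hT.toFinset
  have hs : ∀ {x}, x ∈ s ↔ x ∈ T := hT.mem_toFinset
  have hk : 0 < s.card := card_pos.2 ⟨a, hs.2 ha⟩
  set e := s.orderEmbOfFin rfl
  refine ⟨s.card - 1, fun i => if h : i < s.card then e ⟨i, h⟩ else b, ⟨?_, ?_, ?_⟩, ?_⟩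
  · simp only [hk, dif_pos]
    rw [orderEmbOfFin_zero rfl hk]
    exact le_antisymm (min'_le _ _ (hs.2 ha)) (hTab (hs.1 (min'_mem _ _))).1
  · simp only [show s.card - 1 < s.card by omega, dif_pos]
    rw [orderEmbOfFin_last rfl hk]
    exact le_antisymm (hTab (hs.1 (max'_mem _ _))).2 (le_max' _ _ (hs.2 hb))
  · intro i hi
    simp only [show i < s.card by omega, show i + 1 < s.card by omega, dif_pos]
    exact e.strictMono (Fin.mk_lt_mk.2 (lt_add_one i))
  · intro x hx
    obtain ⟨j, rfl⟩ : x ∈ Set.range e := by rw [range_orderEmbOfFin]; exact hs.2 hx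
    exact ⟨j, by simp only [Set.mem_Iic]; omega, by simp⟩

lemma IsGrid.exists_common_refinement {a b : ℝ} {m m' : ℕ} {σ σ' : ℕ → ℝ}
    (h : IsGrid a b m σ) (h' : IsGrid a b m' σ') :
    ∃ M σs, IsGrid a b M σs ∧ σ '' Set.Iic m ⊆ σs '' Set.Iic M ∧
      σ' '' Set.Iic m' ⊆ σs '' Set.Iic M := by
  obtain ⟨M, σs, hσs, hsub⟩ := exists_isGrid_of_finite
    (((Set.finite_Iic m).image σ).union ((Set.finite_Iic m').image σ'))
    (Or.inl ⟨0, Nat.zero_le m, h.1⟩) (Or.inl ⟨m, Set.mem_Iic.2 le_rfl, h.2.1⟩)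
    (Set.union_subset (Set.image_subset_iff.2 fun _ hi => h.mem_Icc hi)
      (Set.image_subset_iff.2 fun _ hi => h'.mem_Icc hi))
  exact ⟨M, σs, hσs, Set.subset_union_left.trans hsub, Set.subset_union_right.trans hsub⟩

lemma rpow_mul_rpow_le_rpow_add {x y z γ ρ : ℝ} (hxy : x ≤ y) (hyz : y ≤ z) (hγ : 0 ≤ γ)
    (hρ : 0 ≤ ρ) : (y - x) ^ γ * (z - y) ^ ρ ≤ (z - x) ^ (γ + ρ) := by
  rw [Real.rpow_add_of_nonneg (by linarith) hγ hρ]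
  exact mul_le_mul (Real.rpow_le_rpow (by linarith) (by linarith) hγ)
    (Real.rpow_le_rpow (by linarith) (by linarith) hρ) (by positivity)
    (Real.rpow_nonneg (by linarith) γ)

section Young

variable {F G : ℝ → ℝ} {A B γ ρ c d : ℝ}

lemma sewingBound_mul_sub (hA : 0 ≤ A) (hB : 0 ≤ B) (hγ : 0 ≤ γ) (hρ : 0 ≤ ρ)
    (hF : ∀ u v, c ≤ u → u ≤ v → v ≤ d → |F v - F u| ≤ A * (v - u) ^ γ)
    (hG : ∀ u v, c ≤ u → u ≤ v → v ≤ d → |G v - G u| ≤ B * (v - u) ^ ρ) :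
    SewingBound (A * B) (γ + ρ) c d fun x y => F x * (G y - G x) := by
  intro x y z hx hxy hyz hz
  calc |F x * (G z - G x) - F x * (G y - G x) - F y * (G z - G y)|
      = |(F x - F y) * (G z - G y)| := congrArg abs (by ring)
    _ = |F y - F x| * |G z - G y| := by rw [abs_mul, abs_sub_comm]
    _ ≤ A * (y - x) ^ γ * (B * (z - y) ^ ρ) :=
        mul_le_mul (hF x y hx hxy (hyz.trans hz)) (hG y z (hx.trans hxy) hyz hz) (abs_nonneg _)
          (mul_nonneg hA (Real.rpow_nonneg (sub_nonneg.2 hxy) γ))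
    _ = A * B * ((y - x) ^ γ * (z - y) ^ ρ) := by ring
    _ ≤ A * B * (z - x) ^ (γ + ρ) :=
        mul_le_mul_of_nonneg_left (rpow_mul_rpow_le_rpow_add hxy hyz hγ hρ) (mul_nonneg hA hB)

lemma abs_sum_mul_sub_le (hA : 0 ≤ A) (hB : 0 ≤ B) (hγ : 0 ≤ γ) (hρ : 0 ≤ ρ) (hθ : 1 < γ + ρ)
    (hF : ∀ u v, c ≤ u → u ≤ v → v ≤ d → |F v - F u| ≤ A * (v - u) ^ γ)
    (hG : ∀ u v, c ≤ u → u ≤ v → v ≤ d → |G v - G u| ≤ B * (v - u) ^ ρ)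
    (hFc : |F c| ≤ A) (hcd : d - c ≤ 1) {n : ℕ} {τ : ℕ → ℝ} (hτ : IsGrid c d n τ) :
    |∑ j ∈ range n, F (τ j) * (G (τ (j + 1)) - G (τ j))|
      ≤ A * B * (2 ^ (γ + ρ) * sewingConst (γ + ρ) + 1) := by
  have hc := hτ.le
  have hsew := (sewingBound_mul_sub hA hB hγ hρ hF hG).abs_sum_sub_le hθ (mul_nonneg hA hB) hτ
  have h2 : (2 * (d - c)) ^ (γ + ρ) ≤ 2 ^ (γ + ρ) :=
    Real.rpow_le_rpow (by linarith) (by linarith) (by linarith)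
  have hGcd : |G d - G c| ≤ B :=
    (hG c d le_rfl hc le_rfl).trans
      (mul_le_of_le_one_right hB (Real.rpow_le_one (by linarith) hcd hρ))
  calc |∑ j ∈ range n, F (τ j) * (G (τ (j + 1)) - G (τ j))|
      ≤ |∑ j ∈ range n, F (τ j) * (G (τ (j + 1)) - G (τ j)) - F c * (G d - G c)|
        + |F c| * |G d - G c| := by
          rw [← abs_mul]
          exact sub_le_iff_le_add.1 (abs_sub_abs_le_abs_sub _ _)
    _ ≤ A * B * (2 * (d - c)) ^ (γ + ρ) * sewingConst (γ + ρ) + A * B :=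
        add_le_add hsew (mul_le_mul hFc hGcd (abs_nonneg _) hA)
    _ ≤ A * B * 2 ^ (γ + ρ) * sewingConst (γ + ρ) + A * B := by
      gcongr
      exact sewingConst_nonneg _
    _ = A * B * (2 ^ (γ + ρ) * sewingConst (γ + ρ) + 1) := by ring

end Young

def RectHolderWith (C ρ₁ ρ₂ : ℝ) (g : ℝ → ℝ → ℝ) : Prop :=
  ∀ s₁ s₂ t₁ t₂ : ℝ, s₁ ∈ Icc (0:ℝ) 1 → s₂ ∈ Icc (0:ℝ) 1 → t₁ ∈ Icc (0:ℝ) 1 →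
    t₂ ∈ Icc (0:ℝ) 1 → |dd g s₁ s₂ t₁ t₂| ≤ C * |s₂ - s₁| ^ ρ₁ * |t₂ - t₁| ^ ρ₂

def FstHolderWith (C γ : ℝ) (f : ℝ → ℝ → ℝ) : Prop :=
  ∀ s₁ s₂ t : ℝ, s₁ ∈ Icc (0:ℝ) 1 → s₂ ∈ Icc (0:ℝ) 1 → t ∈ Icc (0:ℝ) 1 →
    |d1 f s₁ s₂ t| ≤ C * |s₂ - s₁| ^ γ

lemma dd_flip (g : ℝ → ℝ → ℝ) (s₁ s₂ t₁ t₂ : ℝ) : dd (flip g) s₁ s₂ t₁ t₂ = dd g t₁ t₂ s₁ s₂ := by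
  simp only [dd, flip]
  ring

namespace RectHolderWith

variable {C ρ₁ ρ₂ : ℝ} {g : ℝ → ℝ → ℝ}

lemma nonneg (h : RectHolderWith C ρ₁ ρ₂ g) : 0 ≤ C := by
  have hI : (1 : ℝ) ∈ Icc (0:ℝ) 1 := right_mem_Icc.2 zero_le_one
  have hO : (0 : ℝ) ∈ Icc (0:ℝ) 1 := left_mem_Icc.2 zero_le_one
  simpa using (abs_nonneg _).trans (h 0 1 0 1 hO hI hO hI)

lemma flip (h : RectHolderWith C ρ₁ ρ₂ g) : RectHolderWith C ρ₂ ρ₁ (flip g) :=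
  fun s₁ s₂ t₁ t₂ hs₁ hs₂ ht₁ ht₂ => by
    rw [dd_flip, mul_right_comm]
    exact h t₁ t₂ s₁ s₂ ht₁ ht₂ hs₁ hs₂

end RectHolderWith

lemma FstHolderWith.nonneg {C γ : ℝ} {f : ℝ → ℝ → ℝ} (h : FstHolderWith C γ f) : 0 ≤ C := by
  have hI : (1 : ℝ) ∈ Icc (0:ℝ) 1 := right_mem_Icc.2 zero_le_one
  have hO : (0 : ℝ) ∈ Icc (0:ℝ) 1 := left_mem_Icc.2 zero_le_one
  simpa using (abs_nonneg _).trans (h 0 1 0 hO hI hO)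

/-- The defect of the row sum at `x ≤ y ≤ z` is the one-dimensional Young sum of `f x - f y`
against `g z - g y`. -/
lemma sewingBound_rowSum {f g : ℝ → ℝ → ℝ} {Cf Cg γ₁ γ₂ ρ₁ ρ₂ t t' : ℝ} (hγ₁ : 0 ≤ γ₁)
    (hγ₂ : 0 ≤ γ₂) (hρ₁ : 0 ≤ ρ₁) (hρ₂ : 0 ≤ ρ₂) (hθ₂ : 1 < γ₂ + ρ₂)
    (hf : RectHolderWith Cf γ₁ γ₂ f) (hf₁ : FstHolderWith Cf γ₁ f) (hg : RectHolderWith Cg ρ₁ ρ₂ g)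
    (ht : 0 ≤ t) (ht' : t' ≤ 1) {n : ℕ} {τ : ℕ → ℝ} (hτ : IsGrid t t' n τ) :
    SewingBound (Cf * Cg * (2 ^ (γ₂ + ρ₂) * sewingConst (γ₂ + ρ₂) + 1)) (γ₁ + ρ₁) 0 1
      fun x y => ∑ j ∈ range n, f x (τ j) * dd g x y (τ j) (τ (j + 1)) := by
  intro x y z hx hxy hyz hz
  have hxI : x ∈ Icc (0:ℝ) 1 := ⟨hx, by linarith⟩
  have hyI : y ∈ Icc (0:ℝ) 1 := ⟨by linarith, by linarith⟩
  have hzI : z ∈ Icc (0:ℝ) 1 := ⟨by linarith, hz⟩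
  have htI : ∀ u, t ≤ u → u ≤ t' → u ∈ Icc (0:ℝ) 1 := fun u hu hu' => ⟨by linarith, by linarith⟩
  have habs : ∀ {u v : ℝ}, u ≤ v → |v - u| = v - u := fun h => abs_of_nonneg (sub_nonneg.2 h)
  have hdelta : (∑ j ∈ range n, f x (τ j) * dd g x z (τ j) (τ (j + 1)))
      - (∑ j ∈ range n, f x (τ j) * dd g x y (τ j) (τ (j + 1)))
      - (∑ j ∈ range n, f y (τ j) * dd g y z (τ j) (τ (j + 1)))
      = ∑ j ∈ range n, (f x (τ j) - f y (τ j))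
          * ((g z (τ (j + 1)) - g y (τ (j + 1))) - (g z (τ j) - g y (τ j))) := by
    rw [← sum_sub_distrib, ← sum_sub_distrib]
    exact sum_congr rfl fun j _ => by simp only [dd]; ring
  have hF : ∀ u v, t ≤ u → u ≤ v → v ≤ t' →
      |(f x v - f y v) - (f x u - f y u)| ≤ Cf * (y - x) ^ γ₁ * (v - u) ^ γ₂ := by
    intro u v hu huv hv
    have := hf y x u v hyI hxI (htI u hu (huv.trans hv)) (htI v (hu.trans huv) hv)
    rwa [abs_sub_comm x, habs hxy, habs huv,
      show dd f y x u v = (f x v - f y v) - (f x u - f y u) by simp only [dd]; ring] at this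
  have hG : ∀ u v, t ≤ u → u ≤ v → v ≤ t' →
      |(g z v - g y v) - (g z u - g y u)| ≤ Cg * (z - y) ^ ρ₁ * (v - u) ^ ρ₂ := by
    intro u v hu huv hv
    have := hg y z u v hyI hzI (htI u hu (huv.trans hv)) (htI v (hu.trans huv) hv)
    rwa [habs hyz, habs huv,
      show dd g y z u v = (g z v - g y v) - (g z u - g y u) by simp only [dd]; ring] at this
  have hFt : |f x t - f y t| ≤ Cf * (y - x) ^ γ₁ := by
    have := hf₁ y x t hyI hxI (htI t le_rfl hτ.le)
    rwa [abs_sub_comm x, habs hxy] at this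
  have hyoung := abs_sum_mul_sub_le (by have := hf₁.nonneg; positivity)
    (by have := hg.nonneg; positivity) hγ₂ hρ₂ hθ₂ hF hG hFt (by linarith) hτ
  rw [hdelta]
  refine hyoung.trans ?_
  have hK : 0 ≤ Cf * Cg * (2 ^ (γ₂ + ρ₂) * sewingConst (γ₂ + ρ₂) + 1) := by
    have := hf₁.nonneg; have := hg.nonneg; have := sewingConst_nonneg (γ₂ + ρ₂); positivity
  calc Cf * (y - x) ^ γ₁ * (Cg * (z - y) ^ ρ₁) * (2 ^ (γ₂ + ρ₂) * sewingConst (γ₂ + ρ₂) + 1)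
      = Cf * Cg * (2 ^ (γ₂ + ρ₂) * sewingConst (γ₂ + ρ₂) + 1) * ((y - x) ^ γ₁ * (z - y) ^ ρ₁) := by
        ring
    _ ≤ _ := mul_le_mul_of_nonneg_left (rpow_mul_rpow_le_rpow_add hxy hyz hγ₁ hρ₁) hK

lemma NFin.exists_holderWith {γ₁ γ₂ : ℝ} {f : ℝ → ℝ → ℝ} (h : NFin γ₁ γ₂ f) :
    ∃ C, RectHolderWith C γ₁ γ₂ f ∧ FstHolderWith C γ₁ f ∧ FstHolderWith C γ₂ (flip f) :=
  let ⟨C, hdd, hd1, hd2, _⟩ := h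
  ⟨C, hdd, hd1, fun s₁ s₂ u hs₁ hs₂ hu => hd2 u s₁ s₂ hu hs₁ hs₂⟩

lemma exists_forall_abs_sub_le_of_cauchy {P : Type*} (S : P → ℝ) (Mesh : P → ℝ → Prop)
    (hmono : ∀ p {η η'}, η ≤ η' → Mesh p η → Mesh p η')
    (hS : ∀ ε > 0, ∃ η > 0, ∀ p q, Mesh p η → Mesh q η → |S p - S q| ≤ ε) :
    ∃ L, ∀ ε > 0, ∃ η > 0, ∀ p, Mesh p η → |S p - L| ≤ ε := by
  by_cases hex : ∀ η > 0, ∃ p, Mesh p η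
  · choose p hp using fun k : ℕ => hex (1 / ((k : ℝ) + 1)) Nat.one_div_pos_of_nat
    have hfine : ∀ η > 0, ∀ᶠ k in atTop, Mesh (p k) η := fun η hη =>
      (tendsto_one_div_add_atTop_nhds_zero_nat.eventually (ge_mem_nhds hη)).mono
        fun k hk => hmono _ hk (hp k)
    have hcauchy : CauchySeq (S ∘ p) := Metric.cauchySeq_iff'.2 fun ε hε => by
      obtain ⟨η, hη, hSη⟩ := hS (ε / 2) (half_pos hε)
      obtain ⟨N, hN⟩ := eventually_atTop.1 (hfine η hη)
      exact ⟨N, fun n hn => (hSη _ _ (hN n hn) (hN N le_rfl)).trans_lt (half_lt_self hε)⟩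
    obtain ⟨L, hL⟩ := cauchySeq_tendsto_of_complete hcauchy
    refine ⟨L, fun ε hε => ?_⟩
    obtain ⟨η, hη, hSη⟩ := hS ε hε
    exact ⟨η, hη, fun q hq => le_of_tendsto ((hL.const_sub (S q)).abs)
      ((hfine η hη).mono fun k hk => hSη q (p k) hq hk)⟩
  · push Not at hex
    obtain ⟨η, hη, hnone⟩ := hex
    exact ⟨0, fun _ _ => ⟨η, hη, fun p hp => (hnone p hp).elim⟩⟩

lemma exists_pos_mul_rpow_add_mul_rpow_le (A B : ℝ) {α β : ℝ} (hα : 0 < α) (hβ : 0 < β)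
    {ε : ℝ} (hε : 0 < ε) : ∃ η > 0, A * η ^ α + B * η ^ β ≤ ε := by
  have hcont : ContinuousAt (fun η : ℝ => A * η ^ α + B * η ^ β) 0 :=
    (continuousAt_const.mul (Real.continuousAt_rpow_const _ _ (Or.inr hα.le))).add
      (continuousAt_const.mul (Real.continuousAt_rpow_const _ _ (Or.inr hβ.le)))
  have hlim : Tendsto (fun η : ℝ => A * η ^ α + B * η ^ β) (𝓝[>] 0) (𝓝 0) := by
    simpa [Real.zero_rpow hα.ne', Real.zero_rpow hβ.ne'] using
      hcont.tendsto.mono_left nhdsWithin_le_nhds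
  obtain ⟨η, hηε, hη⟩ := ((hlim.eventually (Iic_mem_nhds hε)).and self_mem_nhdsWithin).exists
  exact ⟨η, hη, hηε⟩

def gridSum (Φ : ℝ → ℝ → ℝ → ℝ → ℝ) (m : ℕ) (σ : ℕ → ℝ) (n : ℕ) (τ : ℕ → ℝ) : ℝ :=
  ∑ i ∈ range m, ∑ j ∈ range n, Φ (σ i) (σ (i + 1)) (τ j) (τ (j + 1))

lemma gridSum_comm (Φ : ℝ → ℝ → ℝ → ℝ → ℝ) (m : ℕ) (σ : ℕ → ℝ) (n : ℕ) (τ : ℕ → ℝ) :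
    gridSum Φ m σ n τ = gridSum (fun u v x y => Φ x y u v) n τ m σ :=
  sum_comm

def SewingBound₂ (C₁ θ₁ C₂ θ₂ s s' t t' : ℝ) (Φ : ℝ → ℝ → ℝ → ℝ → ℝ) : Prop :=
  (∀ n τ, IsGrid t t' n τ →
    SewingBound C₁ θ₁ s s' fun x y => ∑ j ∈ range n, Φ x y (τ j) (τ (j + 1))) ∧
  (∀ m σ, IsGrid s s' m σ →
    SewingBound C₂ θ₂ t t' fun u v => ∑ i ∈ range m, Φ (σ i) (σ (i + 1)) u v)

namespace SewingBound₂

variable {Φ : ℝ → ℝ → ℝ → ℝ → ℝ} {C₁ C₂ θ₁ θ₂ s s' t t' η : ℝ} {m n : ℕ} {σ τ : ℕ → ℝ}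

lemma abs_gridSum_sub_gridSum_le (hΦ : SewingBound₂ C₁ θ₁ C₂ θ₂ s s' t t' Φ)
    (hθ₁ : 1 < θ₁) (hθ₂ : 1 < θ₂) (hC₁ : 0 ≤ C₁) (hC₂ : 0 ≤ C₂) {M N : ℕ} {σs τs : ℕ → ℝ}
    (hσ : IsGrid s s' m σ) (hmσ : MeshLE m σ η) (hσs : IsGrid s s' M σs)
    (hsubσ : σ '' Set.Iic m ⊆ σs '' Set.Iic M)
    (hτ : IsGrid t t' n τ) (hmτ : MeshLE n τ η) (hτs : IsGrid t t' N τs)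
    (hsubτ : τ '' Set.Iic n ⊆ τs '' Set.Iic N) :
    |gridSum Φ m σ n τ - gridSum Φ M σs N τs|
      ≤ C₁ * 2 ^ θ₁ * sewingConst θ₁ * (s' - s) * η ^ (θ₁ - 1)
        + C₂ * 2 ^ θ₂ * sewingConst θ₂ * (t' - t) * η ^ (θ₂ - 1) := by
  have hrefine_s : |gridSum Φ M σs n τ - gridSum Φ m σ n τ|
      ≤ C₁ * 2 ^ θ₁ * sewingConst θ₁ * (s' - s) * η ^ (θ₁ - 1) :=
    (hΦ.1 n τ hτ).abs_sum_sub_sum_le hθ₁ hC₁ hσ hmσ hσs hsubσ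
  have hrefine_t : |gridSum Φ M σs N τs - gridSum Φ M σs n τ|
      ≤ C₂ * 2 ^ θ₂ * sewingConst θ₂ * (t' - t) * η ^ (θ₂ - 1) := by
    rw [gridSum_comm Φ M σs N, gridSum_comm Φ M σs n]
    exact (hΦ.2 M σs hσs).abs_sum_sub_sum_le hθ₂ hC₂ hτ hmτ hτs hsubτ
  rw [abs_sub_comm] at hrefine_s
  exact (abs_sub_le _ _ _).trans (add_le_add hrefine_s (by rwa [abs_sub_comm]))

lemma abs_gridSum_sub_gridSum_le_of_mesh (hΦ : SewingBound₂ C₁ θ₁ C₂ θ₂ s s' t t' Φ)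
    (hθ₁ : 1 < θ₁) (hθ₂ : 1 < θ₂) (hC₁ : 0 ≤ C₁) (hC₂ : 0 ≤ C₂) {m' n' : ℕ} {σ' τ' : ℕ → ℝ}
    (hσ : IsGrid s s' m σ) (hτ : IsGrid t t' n τ) (hmσ : MeshLE m σ η) (hmτ : MeshLE n τ η)
    (hσ' : IsGrid s s' m' σ') (hτ' : IsGrid t t' n' τ') (hmσ' : MeshLE m' σ' η)
    (hmτ' : MeshLE n' τ' η) :
    |gridSum Φ m σ n τ - gridSum Φ m' σ' n' τ'|
      ≤ 2 * (C₁ * 2 ^ θ₁ * sewingConst θ₁ * (s' - s) * η ^ (θ₁ - 1)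
        + C₂ * 2 ^ θ₂ * sewingConst θ₂ * (t' - t) * η ^ (θ₂ - 1)) := by
  obtain ⟨M, σs, hσs, hsubσ, hsubσ'⟩ := hσ.exists_common_refinement hσ'
  obtain ⟨N, τs, hτs, hsubτ, hsubτ'⟩ := hτ.exists_common_refinement hτ'
  have h := hΦ.abs_gridSum_sub_gridSum_le hθ₁ hθ₂ hC₁ hC₂ hσ hmσ hσs hsubσ hτ hmτ hτs hsubτ
  have h' := hΦ.abs_gridSum_sub_gridSum_le hθ₁ hθ₂ hC₁ hC₂ hσ' hmσ' hσs hsubσ' hτ' hmτ' hτs hsubτ'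
  rw [abs_sub_comm] at h'
  linarith [abs_sub_le (gridSum Φ m σ n τ) (gridSum Φ M σs N τs) (gridSum Φ m' σ' n' τ')]

theorem exists_rConv (hΦ : SewingBound₂ C₁ θ₁ C₂ θ₂ s s' t t' Φ)
    (hθ₁ : 1 < θ₁) (hθ₂ : 1 < θ₂) (hC₁ : 0 ≤ C₁) (hC₂ : 0 ≤ C₂) :
    ∃ L, RConv s s' t t' Φ L := by
  obtain ⟨L, hL⟩ := exists_forall_abs_sub_le_of_cauchy
    (fun p : ℕ × ℕ × (ℕ → ℝ) × (ℕ → ℝ) => gridSum Φ p.1 p.2.2.1 p.2.1 p.2.2.2)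
    (fun p η => IsGrid s s' p.1 p.2.2.1 ∧ IsGrid t t' p.2.1 p.2.2.2 ∧
      MeshLE p.1 p.2.2.1 η ∧ MeshLE p.2.1 p.2.2.2 η)
    (fun _ _ _ hηη' hp => ⟨hp.1, hp.2.1, fun i hi => (hp.2.2.1 i hi).trans hηη',
      fun j hj => (hp.2.2.2 j hj).trans hηη'⟩)
    (fun ε hε => by
      obtain ⟨η, hη, hsmall⟩ := exists_pos_mul_rpow_add_mul_rpow_le
        (C₁ * 2 ^ θ₁ * sewingConst θ₁ * (s' - s)) (C₂ * 2 ^ θ₂ * sewingConst θ₂ * (t' - t))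
        (sub_pos.2 hθ₁) (sub_pos.2 hθ₂) (half_pos hε)
      refine ⟨η, hη, fun _ _ ⟨hσ, hτ, hmσ, hmτ⟩ ⟨hσ', hτ', hmσ', hmτ'⟩ => ?_⟩
      have := hΦ.abs_gridSum_sub_gridSum_le_of_mesh hθ₁ hθ₂ hC₁ hC₂
        hσ hτ hmσ hmτ hσ' hτ' hmσ' hmτ'
      linarith)
  exact ⟨L, fun ε hε => (hL ε hε).imp fun η ⟨hη, hLη⟩ =>
    ⟨hη, fun m n σ τ hσ hτ hmσ hmτ => hLη (m, n, σ, τ) ⟨hσ, hτ, hmσ, hmτ⟩⟩⟩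

end SewingBound₂

end TwoDimensionalYoung

theorem stmt1_general
    (γ₁ γ₂ ρ₁ ρ₂ : ℝ)
    (hγ₁ : γ₁ ∈ Set.Ioc (0:ℝ) 1) (hγ₂ : γ₂ ∈ Set.Ioc (0:ℝ) 1)
    (hρ₁ : ρ₁ ∈ Set.Ioc (0:ℝ) 1) (hρ₂ : ρ₂ ∈ Set.Ioc (0:ℝ) 1)
    (h1 : 1 < γ₁ + ρ₁) (h2 : 1 < γ₂ + ρ₂)
    (f g : ℝ → ℝ → ℝ)
    (hfN : NFin γ₁ γ₂ f) (hgN : NFin ρ₁ ρ₂ g)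
    (s s' t t' : ℝ) (hs : 0 ≤ s) (hs' : s' ≤ 1)
    (ht : 0 ≤ t) (ht' : t' ≤ 1) :
    ∃ L : ℝ, RConv s s' t t' (fun a b c d => f a c * dd g a b c d) L := by
  obtain ⟨Cf, hf, hf₁, hf₂⟩ := hfN.exists_holderWith
  obtain ⟨Cg, hg, -⟩ := hgN.exists_holderWith
  have hC : ∀ θ, 0 ≤ Cf * Cg * (2 ^ θ * sewingConst θ + 1) := fun θ => by
    have := hf₁.nonneg; have := hg.nonneg; have := sewingConst_nonneg θ
    positivity
  refine SewingBound₂.exists_rConv ⟨fun n τ hτ => ?_, fun m σ hσ => ?_⟩ h1 h2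
    (hC (γ₂ + ρ₂)) (hC (γ₁ + ρ₁))
  · exact (sewingBound_rowSum hγ₁.1.le hγ₂.1.le hρ₁.1.le hρ₂.1.le h2 hf hf₁ hg ht ht' hτ).mono
      hs hs'
  · have := (sewingBound_rowSum hγ₂.1.le hγ₁.1.le hρ₂.1.le hρ₁.1.le h1
      hf.flip hf₂ hg.flip hs hs' hσ).mono ht ht'
    simpa only [dd_flip, flip] using this

/-- **Two-dimensional Young integral.**
For `γᵢ + ρᵢ > 1` and `f, g` continuous on `[0,1]²` with finite Hölder norms
`𝒩_{γ₁,γ₂}(f)`, `𝒩_{ρ₁,ρ₂}(g)`, the two-dimensional Young Riemann sums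
`Σ f(σᵢ,τⱼ)(δg)(σᵢ,σᵢ₊₁;τⱼ,τⱼ₊₁)` converge on every rectangle of `[0,1]²`. -/
theorem stmt1
    (γ₁ γ₂ ρ₁ ρ₂ : ℝ)
    (hγ₁ : γ₁ ∈ Set.Ioc (0:ℝ) 1) (hγ₂ : γ₂ ∈ Set.Ioc (0:ℝ) 1)
    (hρ₁ : ρ₁ ∈ Set.Ioc (0:ℝ) 1) (hρ₂ : ρ₂ ∈ Set.Ioc (0:ℝ) 1)
    (h1 : 1 < γ₁ + ρ₁) (h2 : 1 < γ₂ + ρ₂)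
    (f g : ℝ → ℝ → ℝ)
    (hfc : ContinuousOn (fun q : ℝ × ℝ => f q.1 q.2) (Icc 0 1 ×ˢ Icc 0 1))
    (hgc : ContinuousOn (fun q : ℝ × ℝ => g q.1 q.2) (Icc 0 1 ×ˢ Icc 0 1))
    (hfN : NFin γ₁ γ₂ f) (hgN : NFin ρ₁ ρ₂ g)
    (s s' t t' : ℝ) (hs : 0 ≤ s) (hss' : s ≤ s') (hs' : s' ≤ 1)
    (ht : 0 ≤ t) (htt' : t ≤ t') (ht' : t' ≤ 1) :
    ∃ L : ℝ, RConv s s' t t' (fun a b c d => f a c * dd g a b c d) L :=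
  stmt1_general γ₁ γ₂ ρ₁ ρ₂ hγ₁ hγ₂ hρ₁ hρ₂ h1 h2 f g hfN hgN s s' t t' hs hs' ht ht'
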